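/- arXiv:0908.1967 — 2 statements merged into one kernel-verified Lean document; each statement's English description precedes it below -/
import Mathlib

section
/- Catabolism insertion is invariant under nonzero corotation: if u = wa is a standard word whose last entry a has nonzero cocharge label, and v = aw, then F(u) = F(v). -/
/-- `w` is a standard word of length `n`: a permutation of `1, …, n`. -/
def IsStandardWord (n : ℕ) (w : List ℕ) : Prop :=
  w.Perm ((List.range n).map (· + 1))

/-- The cocharge label of the entry `i` of the standard word `w`:
the entry `1` is labeled `0`, and the entry `i+1` gets the label of `i`,
incremented by `1` exactly when `i+1` appears to the left of `i` in `w`. -/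
def entryLabel (w : List ℕ) : ℕ → ℕ
  | 0 => 0
  | 1 => 0
  | i + 2 => entryLabel w (i + 1) + (if w.idxOf (i + 2) < w.idxOf (i + 1) then 1 else 0)

/-- The cocharge labeling of `w`: each letter of `w` is replaced by its label. -/
def cochargeLabeling (w : List ℕ) : List ℕ := w.map (entryLabel w)

/-- The cocharge of `w`: the sum of the entries of its cocharge labeling. -/
def cocharge (w : List ℕ) : ℕ := (cochargeLabeling w).sum

/-- Swap the entries of `w` in (0-indexed) positions `j` and `j+1`. -/
def swapAdj (w : List ℕ) (j : ℕ) : List ℕ :=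
  (w.set j (w.getD (j + 1) 0)).set (j + 1) (w.getD j 0)


/-- `ν` is a partition, presented as its (0-indexed) sequence of parts:
weakly decreasing with finitely many nonzero parts. -/
def IsPartitionFn (ν : ℕ → ℕ) : Prop :=
  (∀ i, ν (i + 1) ≤ ν i) ∧ ∃ N, ∀ i, N ≤ i → ν i = 0

/-- `incr ν a` is `ν + ε_{a+1}`: increment the part of (1-indexed) index `a+1`,
i.e. the part with 0-indexed index `a`. -/
def incr (ν : ℕ → ℕ) (a : ℕ) : ℕ → ℕ := fun i => if i = a then ν a + 1 else ν i

open Classical in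
/-- One step of the catabolism insertion algorithm: present the last letter `a`
of the word to the partition; insert it if `ν + ε_{a+1}` is a partition,
and otherwise corotate, prepending `a + 1` to the word. -/
noncomputable def step (s : List ℕ × (ℕ → ℕ)) : List ℕ × (ℕ → ℕ) :=
  match s.1.getLast? with
  | none => s
  | some a =>
      if IsPartitionFn (incr s.2 a) then (s.1.dropLast, incr s.2 a)
      else ((a + 1) :: s.1.dropLast, s.2)

/-- The catabolism insertion algorithm, run on the standard word `w` starting
from `(cochargeLabeling w, ∅)`, terminates with empty word and partition `ν`;
i.e. `F w = ν`. -/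
def Outputs (w : List ℕ) (ν : ℕ → ℕ) : Prop :=
  ∃ k : ℕ, step^[k] (cochargeLabeling w, fun _ => 0) = ([], ν)

/-!
The first step of catabolism insertion on `w ++ [a]` presents the label `c ≥ 1` of `a` to the
empty partition. Since `ε_{c+1}` is not a partition, the step corotates and leaves the word
`(c + 1) :: labels of w`. This is exactly the cocharge labeling of `a :: w`: moving `a` from the
end to the front removes the descent between `a + 1` and `a` and creates one between `a` and
`a - 1`, so the label of `a` goes up by one and every other label is unchanged. Hence the two
runs agree from the second step of the first one on.
-/

namespace IsStandardWord

variable {n : ℕ} {u : List ℕ}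

theorem mem_iff (hu : IsStandardWord n u) {x : ℕ} : x ∈ u ↔ 1 ≤ x ∧ x ≤ n := by
  rw [List.Perm.mem_iff hu]
  simp only [List.mem_map, List.mem_range]
  constructor
  · rintro ⟨j, hj, rfl⟩
    omega
  · rintro ⟨h1, h2⟩
    exact ⟨x - 1, by omega, by omega⟩

theorem nodup (hu : IsStandardWord n u) : u.Nodup :=
  hu.nodup_iff.mpr (List.nodup_range.map fun _ _ h => by omega)

variable {w : List ℕ} {a : ℕ}

theorem notMem_of_append_singleton (hu : IsStandardWord n (w ++ [a])) : a ∉ w := fun h =>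
  (List.nodup_append.mp hu.nodup).2.2 a h a (List.mem_singleton_self a) rfl

theorem mem_of_append_singleton (hu : IsStandardWord n (w ++ [a])) {x : ℕ} (h1 : 1 ≤ x)
    (hn : x ≤ n) (hxa : x ≠ a) : x ∈ w := by
  rcases List.mem_append.mp (hu.mem_iff.mpr ⟨h1, hn⟩) with h | h
  · exact h
  · exact absurd (List.mem_singleton.mp h) hxa

/-- Moving `a` to the front moves the descent indicator from the pair `(a + 1, a)` to the
pair `(a, a - 1)`. -/
theorem descent_cons_add_eq (hu : IsStandardWord n (w ++ [a])) {j : ℕ} (hj : 1 ≤ j)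
    (hjn : j + 1 ≤ n) :
    (if (a :: w).idxOf (j + 1) < (a :: w).idxOf j then 1 else 0) + (if j = a then 1 else 0) =
      (if (w ++ [a]).idxOf (j + 1) < (w ++ [a]).idxOf j then 1 else 0) +
        (if j + 1 = a then 1 else 0) := by
  have haw := hu.notMem_of_append_singleton
  have idx_last : (w ++ [a]).idxOf a = w.length := by
    rw [List.idxOf_append_of_notMem haw, List.idxOf_cons_self, add_zero]
  have idx_init : ∀ x, 1 ≤ x → x ≤ n → x ≠ a →
      (w ++ [a]).idxOf x = w.idxOf x ∧ (a :: w).idxOf x = w.idxOf x + 1 ∧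
        w.idxOf x < w.length := fun x h1 hn hxa =>
    have hx := hu.mem_of_append_singleton h1 hn hxa
    ⟨List.idxOf_append_of_mem hx, List.idxOf_cons_ne w (Ne.symm hxa),
      List.idxOf_lt_length_iff.mpr hx⟩
  rcases eq_or_ne j a with rfl | hja
  · obtain ⟨h₁, h₂, h₃⟩ := idx_init (j + 1) (by omega) hjn (by omega)
    rw [h₁, h₂, idx_last, List.idxOf_cons_self]
    split_ifs <;> omega
  rcases eq_or_ne (j + 1) a with rfl | hja'
  · obtain ⟨h₁, h₂, h₃⟩ := idx_init j hj (by omega) hja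
    rw [h₁, h₂, idx_last, List.idxOf_cons_self]
    split_ifs <;> omega
  · obtain ⟨h₁, h₂, -⟩ := idx_init j hj (by omega) hja
    obtain ⟨h₁', h₂', -⟩ := idx_init (j + 1) (by omega) hjn hja'
    rw [h₁, h₂, h₁', h₂']
    split_ifs <;> omega

theorem entryLabel_cons (hu : IsStandardWord n (w ++ [a])) (ha : 2 ≤ a) {k : ℕ} (hk : 1 ≤ k)
    (hkn : k ≤ n) :
    entryLabel (a :: w) k = entryLabel (w ++ [a]) k + if k = a then 1 else 0 := by
  induction k, hk using Nat.le_induction with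
  | base => simp [entryLabel, show 1 ≠ a by omega]
  | succ j hj ih =>
    obtain ⟨i, rfl⟩ : ∃ i, j = i + 1 := ⟨j - 1, by omega⟩
    have := hu.descent_cons_add_eq hj hkn
    simp only [entryLabel, Nat.add_assoc, Nat.reduceAdd] at ih this ⊢
    omega

theorem cochargeLabeling_cons (hu : IsStandardWord n (w ++ [a])) (ha : 2 ≤ a) :
    cochargeLabeling (a :: w) =
      (entryLabel (w ++ [a]) a + 1) :: w.map (entryLabel (w ++ [a])) := by
  have label_eq : ∀ x ∈ w ++ [a], entryLabel (a :: w) x =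
      entryLabel (w ++ [a]) x + if x = a then 1 else 0 := fun x hx =>
    hu.entryLabel_cons ha (hu.mem_iff.mp hx).1 (hu.mem_iff.mp hx).2
  rw [cochargeLabeling, List.map_cons, label_eq a (by simp), if_pos rfl]
  congr 1
  refine List.map_congr_left fun x hx => ?_
  rw [label_eq x (List.mem_append_left _ hx),
    if_neg (ne_of_mem_of_not_mem hx hu.notMem_of_append_singleton), add_zero]

end IsStandardWord

theorem cochargeLabeling_append_singleton (w : List ℕ) (a : ℕ) :
    cochargeLabeling (w ++ [a]) = w.map (entryLabel (w ++ [a])) ++ [entryLabel (w ++ [a]) a] :=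
  List.map_append ..

theorem two_le_of_entryLabel_ne_zero {w : List ℕ} {a : ℕ} (h : entryLabel w a ≠ 0) : 2 ≤ a := by
  match a, h with
  | a + 2, _ => omega

theorem not_isPartitionFn_incr_zero {c : ℕ} (hc : c ≠ 0) :
    ¬ IsPartitionFn (incr (fun _ => 0) c) := fun ⟨hdec, _⟩ => by
  have := hdec (c - 1)
  simp only [incr, Nat.sub_add_cancel (Nat.one_le_iff_ne_zero.mpr hc),
    if_true, if_neg (show c - 1 ≠ c by omega)] at this
  omega

theorem step_append_singleton_of_not_isPartitionFn {l : List ℕ} {c : ℕ} {ν : ℕ → ℕ}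
    (h : ¬ IsPartitionFn (incr ν c)) : step (l ++ [c], ν) = ((c + 1) :: l, ν) := by
  simp only [step, List.getLast?_concat, if_neg h, List.dropLast_concat]

theorem outputs_iff_of_step_eq {u v : List ℕ} (hu : u ≠ [])
    (hstep : step (cochargeLabeling u, fun _ => 0) = (cochargeLabeling v, fun _ => 0))
    (ν : ℕ → ℕ) : Outputs u ν ↔ Outputs v ν := by
  constructor
  · rintro ⟨_ | k, hk⟩
    · exact absurd (congrArg Prod.fst hk) (by simpa [cochargeLabeling] using hu)
    · exact ⟨k, by rwa [Function.iterate_succ_apply, hstep] at hk⟩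
  · rintro ⟨k, hk⟩
    exact ⟨k + 1, by rwa [Function.iterate_succ_apply, hstep]⟩

/-- Catabolism insertion is invariant under nonzero corotation: if
`u = w ++ [a]` is a standard word whose last entry `a` has nonzero cocharge
label, and `v = a :: w`, then `F u = F v`. -/
theorem outputs_nonzero_corotation (n : ℕ) (w : List ℕ) (a : ℕ)
    (hu : IsStandardWord n (w ++ [a]))
    (hnz : (cochargeLabeling (w ++ [a])).getLastD 0 ≠ 0) :
    ∀ ν : ℕ → ℕ, Outputs (w ++ [a]) ν ↔ Outputs (a :: w) ν := by
  have hc : entryLabel (w ++ [a]) a ≠ 0 := by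
    simpa [cochargeLabeling_append_singleton] using hnz
  refine outputs_iff_of_step_eq (by simp) ?_
  rw [cochargeLabeling_append_singleton, hu.cochargeLabeling_cons (two_le_of_entryLabel_ne_zero hc)]
  exact step_append_singleton_of_not_isPartitionFn (not_isPartitionFn_incr_zero hc)
end

section
/- Suppose u is a standard word of length n and v = u s_d with cocharge(v) = cocharge(u) and the cocharge labeling of u satisfies z_d ≠ z_{d+1} + 1. If j is a chain of the extended function of u, then s_d(j) is a chain of the extended function of v. -/
/-- The extension `w̃ : ℤ_{≤ n} → ℤ_{≥ 0}` of the cocharge labeling `z` of `w`: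
`w̃ i = z_{i + k n} + k` where `k` is the unique integer with `i + k n ∈ [1, n]`
(defined on all of `ℤ`; only values at `i ≤ n` are relevant). -/
def extFn (w : List ℕ) (n : ℕ) (i : ℤ) : ℤ :=
  ((cochargeLabeling w).getD ((i - 1).emod (n : ℤ)).toNat 0 : ℤ) - (i - 1).fdiv (n : ℤ)

/-- `j` (restricted to indices `0, …, k'`) is a chain of `g` of length `k' + 1`:
`j_{k'} < ⋯ < j_0` are integers `≤ n` with `g (j_i) = i` and pairwise distinct
residues mod `n`. -/
def IsChainOf (g : ℤ → ℤ) (n : ℕ) (k' : ℕ) (j : ℕ → ℤ) : Prop :=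
  (∀ i ≤ k', j i ≤ (n : ℤ)) ∧
  (∀ i, i + 1 ≤ k' → j (i + 1) < j i) ∧
  (∀ i ≤ k', g (j i) = (i : ℤ)) ∧
  (∀ i i', i ≤ k' → i' ≤ k' → i ≠ i' → j i % (n : ℤ) ≠ j i' % (n : ℤ))

/-- A `k`-bounded chain family of `g`: finitely many chains of `g`, each of
length at most `k`, whose residue sets mod `n` are pairwise disjoint. -/
structure BddChainFamily (g : ℤ → ℤ) (n k : ℕ) where
  /-- the number of chains -/
  L : ℕ
  /-- `len t + 1` is the length of the `t`-th chain -/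
  len : Fin L → ℕ
  /-- the `t`-th chain -/
  j : Fin L → ℕ → ℤ
  chain : ∀ t, IsChainOf g n (len t) (j t)
  bdd : ∀ t, len t + 1 ≤ k
  disj : ∀ t t', t ≠ t' → ∀ i i', i ≤ len t → i' ≤ len t' →
    j t i % (n : ℤ) ≠ j t' i' % (n : ℤ)

/-- The size of a chain family: the cardinality of its support, the union of
the underlying sets of its chains. -/
def BddChainFamily.size {g : ℤ → ℤ} {n k : ℕ} (A : BddChainFamily g n k) : ℕ :=
  ((Finset.univ : Finset (Fin A.L)).biUnion
    (fun t => (Finset.range (A.len t + 1)).image (A.j t))).card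

/-- `I_k(g)`: the maximum size of a `k`-bounded chain family of `g`. -/
noncomputable def Ik (g : ℤ → ℤ) (n k : ℕ) : ℕ :=
  sSup {m | ∃ A : BddChainFamily g n k, A.size = m}

/-- The affine simple reflection `s_d` (for `1 ≤ d ≤ n - 1`): it transposes
`d + k n` and `d + 1 + k n` for every integer `k`. -/
def affSwap (n d : ℕ) (m : ℤ) : ℤ :=
  if m % (n : ℤ) = (d : ℤ) % (n : ℤ) then m + 1
  else if m % (n : ℤ) = ((d : ℤ) + 1) % (n : ℤ) then m - 1
  else m

/-!
Swapping the adjacent letters `a = u_d` and `b = u_{d+1}` permutes positions by the transposition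
`(d d+1)`, so the relative order of two letters changes only for the pair `{a, b}`. Hence the
descents `k + 1` before `k`, and with them all cocharge labels, are unchanged unless `|a - b| = 1`;
if `b = a + 1` the swap creates a descent at `a`, which raises the label of `b` and lowers none, so
the cocharge strictly grows (and symmetrically if `a = b + 1`). Equal cocharge therefore forces
`z(v) = z(u) s_d`, i.e. `ṽ ∘ s_d = ũ`. Finally, `s_d` preserves the order of integers except for
the pairs `nq + d < nq + d + 1`, and such a pair of consecutive chain entries would force
`z_d = z_{d+1} + 1`.
-/

open List

section SwapAdj

variable {w : List ℕ} {e : ℕ}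

lemma length_swapAdj : (swapAdj w e).length = w.length := by
  simp [swapAdj]

lemma getElem?_swapAdj (he : e + 1 < w.length) (i : ℕ) :
    (swapAdj w e)[i]? = w[Equiv.swap e (e + 1) i]? := by
  have h0 : w[e]? = some w[e] := getElem?_eq_getElem (by omega)
  have h1 : w[e + 1]? = some w[e + 1] := getElem?_eq_getElem he
  simp only [swapAdj, getElem?_set, length_set, getD_eq_getElem?_getD, h0, h1, Option.getD_some,
    Equiv.swap_apply_def]
  split_ifs <;> subst_vars <;> first | rfl | omega | simp_all

lemma getD_swapAdj (he : e + 1 < w.length) (i : ℕ) :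
    (swapAdj w e).getD i 0 = w.getD (Equiv.swap e (e + 1) i) 0 := by
  simp only [getD_eq_getElem?_getD, getElem?_swapAdj he]

lemma getElem_swapAdj_left (he : e + 1 < w.length) :
    (swapAdj w e)[e]'(by rw [length_swapAdj]; omega) = w[e + 1] := by
  simp [swapAdj, getElem?_eq_getElem he]

lemma getElem_swapAdj_right (he : e + 1 < w.length) :
    (swapAdj w e)[e + 1]'(by rwa [length_swapAdj]) = w[e] := by
  simp [swapAdj, getElem?_eq_getElem (by omega : e < w.length)]

lemma swapAdj_swapAdj (he : e + 1 < w.length) : swapAdj (swapAdj w e) e = w :=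
  ext_getElem? fun i => by
    rw [getElem?_swapAdj (by rwa [length_swapAdj]), getElem?_swapAdj he, Equiv.swap_apply_self]

lemma swapAdj_map (f : ℕ → ℕ) (he : e + 1 < w.length) :
    swapAdj (w.map f) e = (swapAdj w e).map f :=
  ext_getElem? fun i => by
    rw [getElem?_swapAdj (by rwa [length_map]), getElem?_map, getElem?_map, getElem?_swapAdj he]

lemma swapAdj_perm : ∀ {w : List ℕ} {e : ℕ}, e + 1 < w.length → (swapAdj w e).Perm w
  | a :: b :: l, 0, _ => by simpa [swapAdj] using Perm.swap a b l
  | a :: l, e + 1, he => by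
    simpa [swapAdj] using (swapAdj_perm (w := l) (e := e) (by simp at he; omega)).cons a

lemma idxOf_swapAdj (hw : w.Nodup) (he : e + 1 < w.length) (m : ℕ) :
    (swapAdj w e).idxOf m = Equiv.swap e (e + 1) (w.idxOf m) := by
  by_cases hm : m ∈ w
  · have hi : (swapAdj w e)[Equiv.swap e (e + 1) (w.idxOf m)]? = some m := by
      rw [getElem?_swapAdj he, Equiv.swap_apply_self, getElem?_idxOf hm]
    obtain ⟨hlt, hget⟩ := List.getElem?_eq_some_iff.mp hi
    rw [← ((swapAdj_perm he).nodup_iff.mpr hw).idxOf_getElem _ hlt, hget]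
  · have hm' : m ∉ swapAdj w e := fun h => hm ((swapAdj_perm he).subset h)
    rw [idxOf_of_notMem hm, idxOf_of_notMem hm', length_swapAdj,
      Equiv.swap_apply_of_ne_of_ne (by omega) (by omega)]

lemma idxOf_swapAdj_lt_iff (hw : w.Nodup) (he : e + 1 < w.length) {p q : ℕ}
    (hpq : ¬ (w.idxOf p = e ∧ w.idxOf q = e + 1)) (hqp : ¬ (w.idxOf p = e + 1 ∧ w.idxOf q = e)) :
    (swapAdj w e).idxOf p < (swapAdj w e).idxOf q ↔ w.idxOf p < w.idxOf q := by
  rw [idxOf_swapAdj hw he, idxOf_swapAdj hw he, Equiv.swap_apply_def, Equiv.swap_apply_def]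
  split_ifs <;> omega

end SwapAdj

section Labels

lemma entryLabel_le_entryLabel {w w' : List ℕ}
    (h : ∀ k, w.idxOf (k + 1) < w.idxOf k → w'.idxOf (k + 1) < w'.idxOf k) :
    ∀ m, entryLabel w m ≤ entryLabel w' m
  | 0 | 1 => le_rfl
  | m + 2 => by
    have ih := entryLabel_le_entryLabel h (m + 1)
    have hm : w.idxOf (m + 2) < w.idxOf (m + 1) → w'.idxOf (m + 2) < w'.idxOf (m + 1) :=
      h (m + 1)
    simp only [entryLabel]
    split_ifs <;> omega

lemma entryLabel_lt_entryLabel {w w' : List ℕ}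
    (h : ∀ k, w.idxOf (k + 1) < w.idxOf k → w'.idxOf (k + 1) < w'.idxOf k) {k : ℕ}
    (hw : ¬ w.idxOf (k + 2) < w.idxOf (k + 1)) (hw' : w'.idxOf (k + 2) < w'.idxOf (k + 1)) :
    entryLabel w (k + 2) < entryLabel w' (k + 2) := by
  have := entryLabel_le_entryLabel h (k + 1)
  simp only [entryLabel, if_pos hw', if_neg hw]
  omega

variable {w : List ℕ} {e : ℕ}

lemma idxOf_eq_iff_of_nodup (hw : w.Nodup) {i : ℕ} (hi : i < w.length) (m : ℕ) :
    w.idxOf m = i ↔ m = w[i] := by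
  constructor
  · rintro rfl
    exact (getElem_idxOf hi).symm
  · rintro rfl
    exact hw.idxOf_getElem i hi

lemma swapAdj_descent_of_descent (hw : w.Nodup) (he : e + 1 < w.length)
    (hne : w[e] ≠ w[e + 1] + 1) {k : ℕ} (hk : w.idxOf (k + 1) < w.idxOf k) :
    (swapAdj w e).idxOf (k + 1) < (swapAdj w e).idxOf k := by
  rw [idxOf_swapAdj_lt_iff hw he]
  · exact hk
  · rw [idxOf_eq_iff_of_nodup hw (by omega), idxOf_eq_iff_of_nodup hw he]
    omega
  · omega

lemma entryLabel_le_entryLabel_swapAdj (hw : w.Nodup) (he : e + 1 < w.length)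
    (hne : w[e] ≠ w[e + 1] + 1) (m : ℕ) : entryLabel w m ≤ entryLabel (swapAdj w e) m :=
  entryLabel_le_entryLabel (fun _ => swapAdj_descent_of_descent hw he hne) m

end Labels

section Cocharge

variable {w : List ℕ} {e : ℕ}

lemma cocharge_lt_cocharge_swapAdj (hw : w.Nodup) (h0 : 0 ∉ w) (he : e + 1 < w.length)
    (hsucc : w[e + 1] = w[e] + 1) : cocharge w < cocharge (swapAdj w e) := by
  have hne : w[e] ≠ w[e + 1] + 1 := by omega
  obtain ⟨k, hk⟩ : ∃ k, w[e] = k + 1 :=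
    Nat.exists_eq_succ_of_ne_zero fun h => h0 (h ▸ getElem_mem _)
  have hk1 : w.idxOf (k + 1) = e := (idxOf_eq_iff_of_nodup hw (by omega) _).mpr hk.symm
  have hk2 : w.idxOf (k + 2) = e + 1 := (idxOf_eq_iff_of_nodup hw he _).mpr (by omega)
  unfold cocharge cochargeLabeling
  rw [((swapAdj_perm he).map (entryLabel (swapAdj w e))).sum_eq]
  refine sum_lt_sum _ _ (fun m _ => entryLabel_le_entryLabel_swapAdj hw he hne m)
    ⟨k + 2, by rw [show k + 2 = w[e + 1] by omega]; exact getElem_mem he, ?_⟩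
  apply entryLabel_lt_entryLabel fun _ => swapAdj_descent_of_descent hw he hne
  · omega
  · rw [idxOf_swapAdj hw he, idxOf_swapAdj hw he, hk1, hk2, Equiv.swap_apply_left,
      Equiv.swap_apply_right]
    omega

lemma entryLabel_swapAdj (hw : w.Nodup) (he : e + 1 < w.length) (hne : w[e] ≠ w[e + 1] + 1)
    (hne' : w[e + 1] ≠ w[e] + 1) : entryLabel (swapAdj w e) = entryLabel w := by
  funext m
  refine le_antisymm ?_ (entryLabel_le_entryLabel_swapAdj hw he hne m)
  have hv := (swapAdj_perm he).nodup_iff.mpr hw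
  have hev : e + 1 < (swapAdj w e).length := by rwa [length_swapAdj]
  simpa only [swapAdj_swapAdj he] using
    entryLabel_le_entryLabel_swapAdj hv hev (by rwa [getElem_swapAdj_left he, getElem_swapAdj_right he]) m

lemma entryLabel_swapAdj_of_cocharge_eq (hw : w.Nodup) (h0 : 0 ∉ w) (he : e + 1 < w.length)
    (hcc : cocharge (swapAdj w e) = cocharge w) : entryLabel (swapAdj w e) = entryLabel w := by
  refine entryLabel_swapAdj hw he (fun hpred => ?_)
    fun hsucc => (cocharge_lt_cocharge_swapAdj hw h0 he hsucc).ne' hcc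
  have hv := (swapAdj_perm he).nodup_iff.mpr hw
  have h0v : 0 ∉ swapAdj w e := fun h => h0 ((swapAdj_perm he).subset h)
  have hev : e + 1 < (swapAdj w e).length := by rwa [length_swapAdj]
  have := cocharge_lt_cocharge_swapAdj hv h0v hev (by rwa [getElem_swapAdj_left he, getElem_swapAdj_right he])
  rw [swapAdj_swapAdj he] at this
  exact this.ne hcc

lemma cochargeLabeling_swapAdj (he : e + 1 < w.length)
    (h : entryLabel (swapAdj w e) = entryLabel w) :
    cochargeLabeling (swapAdj w e) = swapAdj (cochargeLabeling w) e := by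
  rw [cochargeLabeling, h, cochargeLabeling, swapAdj_map _ he]

end Cocharge

section Affine

variable {n e : ℕ}

lemma exists_eq_mul_add_add_one (hn : 0 < n) (x : ℤ) :
    ∃ (q : ℤ) (r : ℕ), r < n ∧ x = n * q + r + 1 := by
  have h0 := Int.emod_nonneg (x - 1) (by omega : (n : ℤ) ≠ 0)
  have hlt := Int.emod_lt_of_pos (x - 1) (by omega : (0 : ℤ) < n)
  have hdiv := Int.mul_ediv_add_emod (x - 1) n
  exact ⟨(x - 1) / n, ((x - 1) % n).toNat, by omega, by omega⟩

lemma emod_mul_add_add_one (q : ℤ) (r : ℕ) : ((n : ℤ) * q + r + 1) % n = ((r : ℤ) + 1) % n := by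
  rw [show (n : ℤ) * q + r + 1 = r + 1 + n * q by ring, Int.add_mul_emod_self_left]

lemma add_one_emod_eq_iff {r r' : ℕ} (hr : r < n) (hr' : r' < n) :
    ((r : ℤ) + 1) % n = ((r' : ℤ) + 1) % n ↔ r = r' := by
  refine ⟨fun h => ?_, fun h => h ▸ rfl⟩
  have h' : (r : ℤ) % n = (r' : ℤ) % n := Int.ModEq.add_right_cancel' 1 h
  rwa [Int.emod_eq_of_lt (by omega) (by omega), Int.emod_eq_of_lt (by omega) (by omega),
    Nat.cast_inj] at h'

lemma extFn_mul_add_add_one (w : List ℕ) (q : ℤ) {r : ℕ} (hr : r < n) :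
    extFn w n (n * q + r + 1) = ((cochargeLabeling w).getD r 0 : ℤ) - q := by
  have hsub : (n : ℤ) * q + r + 1 - 1 = r + n * q := by ring
  have hn : (n : ℤ) ≠ 0 := by omega
  have hr0 : (0 : ℤ) ≤ r := by omega
  have hrn : (r : ℤ) < n := by omega
  change ((cochargeLabeling w).getD (((n * q + r + 1 - 1 : ℤ)) % n).toNat 0 : ℤ)
    - (n * q + r + 1 - 1 : ℤ).fdiv n = _
  rw [hsub, Int.add_mul_emod_self_left, Int.emod_eq_of_lt hr0 hrn, Int.toNat_natCast,
    Int.fdiv_eq_ediv_of_nonneg _ (by omega), Int.add_mul_ediv_left _ _ hn,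
    Int.ediv_eq_zero_of_lt hr0 hrn, zero_add]

lemma swap_succ_apply_lt (he : e + 2 ≤ n) {r : ℕ} (hr : r < n) : Equiv.swap e (e + 1) r < n := by
  rw [Equiv.swap_apply_def]
  split_ifs <;> omega

lemma affSwap_mul_add_add_one (he : e + 2 ≤ n) (q : ℤ) {r : ℕ} (hr : r < n) :
    affSwap n (e + 1) (n * q + r + 1) = n * q + (Equiv.swap e (e + 1) r : ℕ) + 1 := by
  have hd : ((r : ℤ) + 1) % n = ((e + 1 : ℕ) : ℤ) % n ↔ r = e := by
    rw [Nat.cast_succ]; exact add_one_emod_eq_iff hr (by omega)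
  simp only [affSwap, emod_mul_add_add_one, hd, add_one_emod_eq_iff hr he, Equiv.swap_apply_def]
  split_ifs <;> subst_vars <;> push_cast <;> ring

lemma affSwap_le (he : e + 2 ≤ n) {x : ℤ} (hx : x ≤ n) : affSwap n (e + 1) x ≤ n := by
  obtain ⟨q, r, hr, rfl⟩ := exists_eq_mul_add_add_one (by omega : 0 < n) x
  have hq : q ≤ 0 := by nlinarith
  have hσ : ((Equiv.swap e (e + 1) r : ℕ) : ℤ) < n := by exact_mod_cast swap_succ_apply_lt he hr
  rw [affSwap_mul_add_add_one he q hr]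
  nlinarith

lemma affSwap_emod_inj (he : e + 2 ≤ n) {x y : ℤ}
    (h : affSwap n (e + 1) x % n = affSwap n (e + 1) y % n) : x % n = y % n := by
  obtain ⟨q, r, hr, rfl⟩ := exists_eq_mul_add_add_one (by omega : 0 < n) x
  obtain ⟨q', r', hr', rfl⟩ := exists_eq_mul_add_add_one (by omega : 0 < n) y
  rw [affSwap_mul_add_add_one he q hr, affSwap_mul_add_add_one he q' hr', emod_mul_add_add_one,
    emod_mul_add_add_one, add_one_emod_eq_iff (swap_succ_apply_lt he hr) (swap_succ_apply_lt he hr')] at h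
  rw [emod_mul_add_add_one, emod_mul_add_add_one, add_one_emod_eq_iff hr hr']
  exact (Equiv.swap e (e + 1)).injective h

lemma affSwap_lt_affSwap (he : e + 2 ≤ n) {x y : ℤ} (hxy : x < y)
    (hadj : ¬ ∃ q : ℤ, x = n * q + e + 1 ∧ y = n * q + (e + 1 : ℕ) + 1) :
    affSwap n (e + 1) x < affSwap n (e + 1) y := by
  obtain ⟨q, r, hr, rfl⟩ := exists_eq_mul_add_add_one (by omega : 0 < n) x
  obtain ⟨q', r', hr', rfl⟩ := exists_eq_mul_add_add_one (by omega : 0 < n) y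
  rw [affSwap_mul_add_add_one he q hr, affSwap_mul_add_add_one he q' hr']
  have hσ : ((Equiv.swap e (e + 1) r : ℕ) : ℤ) < n := by exact_mod_cast swap_succ_apply_lt he hr
  have hσ' : ((Equiv.swap e (e + 1) r' : ℕ) : ℤ) < n := by exact_mod_cast swap_succ_apply_lt he hr'
  rcases lt_trichotomy q q' with hq | rfl | hq
  · nlinarith
  · have hrr : r < r' := by exact_mod_cast (by linarith : (r : ℤ) < r')
    have : Equiv.swap e (e + 1) r < Equiv.swap e (e + 1) r' := by
      rw [Equiv.swap_apply_def, Equiv.swap_apply_def]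
      split_ifs <;> subst_vars <;> first | omega | exact absurd ⟨q, rfl, rfl⟩ hadj
    have : ((Equiv.swap e (e + 1) r : ℕ) : ℤ) < (Equiv.swap e (e + 1) r' : ℕ) := by
      exact_mod_cast this
    linarith
  · nlinarith

lemma extFn_affSwap {u v : List ℕ} (he : e + 2 ≤ n) (hlen : (cochargeLabeling u).length = n)
    (hz : cochargeLabeling v = swapAdj (cochargeLabeling u) e) (x : ℤ) :
    extFn v n (affSwap n (e + 1) x) = extFn u n x := by
  obtain ⟨q, r, hr, rfl⟩ := exists_eq_mul_add_add_one (by omega : 0 < n) x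
  rw [affSwap_mul_add_add_one he q hr, extFn_mul_add_add_one _ _ (swap_succ_apply_lt he hr),
    extFn_mul_add_add_one _ _ hr, hz, getD_swapAdj (by omega), Equiv.swap_apply_self]

end Affine

section StandardWord

variable {n : ℕ} {u : List ℕ}

lemma IsStandardWord.length_eq (hu : IsStandardWord n u) : u.length = n := by
  simpa using List.Perm.length_eq hu

lemma IsStandardWord.nodup_s12 (hu : IsStandardWord n u) : u.Nodup :=
  hu.nodup_iff.mpr (List.nodup_range.map fun _ _ => Nat.add_right_cancel)

lemma IsStandardWord.zero_notMem (hu : IsStandardWord n u) : 0 ∉ u := fun h => by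
  simpa using hu.subset h

end StandardWord

/-- Suppose `u` is a standard word of length `n`, `1 ≤ d ≤ n - 1`, and
`v = u s_d` (swapping the 1-indexed positions `d` and `d + 1`) has the same
cocharge as `u`, and the cocharge labeling `z` of `u` satisfies
`z_d ≠ z_{d+1} + 1`.  If `j` is a chain of `ũ`, then `s_d(j)` is a chain of
`ṽ`. -/
theorem chain_swap (n : ℕ) (u : List ℕ) (hu : IsStandardWord n u)
    (d : ℕ) (hd1 : 1 ≤ d) (hd2 : d ≤ n - 1)
    (hcc : cocharge (swapAdj u (d - 1)) = cocharge u)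
    (hlab : (cochargeLabeling u).getD (d - 1) 0 ≠
      (cochargeLabeling u).getD d 0 + 1)
    (k' : ℕ) (j : ℕ → ℤ) (hj : IsChainOf (extFn u n) n k' j) :
    IsChainOf (extFn (swapAdj u (d - 1)) n) n k' (fun i => affSwap n d (j i)) := by
  obtain ⟨e, rfl⟩ : ∃ e, d = e + 1 := ⟨d - 1, by omega⟩
  simp only [Nat.add_sub_cancel] at hcc hlab ⊢
  have he : e + 2 ≤ n := by omega
  have hlen : u.length = n := hu.length_eq
  have hz := cochargeLabeling_swapAdj (by omega)
    (entryLabel_swapAdj_of_cocharge_eq hu.nodup_s12 hu.zero_notMem (by omega) hcc)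
  obtain ⟨hle, hlt, hval, hres⟩ := hj
  refine ⟨fun i hi => affSwap_le he (hle i hi), fun i hi => affSwap_lt_affSwap he (hlt i hi) ?_,
    fun i hi => ?_, fun i i' hi hi' hne h => hres i i' hi hi' hne (affSwap_emod_inj he h)⟩
  · -- consecutive entries `nq + d, nq + d + 1` would have labels `z_d - q = z_{d+1} - q + 1`
    rintro ⟨q, hx, hy⟩
    have h1 := hval (i + 1) hi
    have h0 := hval i (by omega)
    rw [hx, extFn_mul_add_add_one _ _ (by omega)] at h1
    rw [hy, extFn_mul_add_add_one _ _ (by omega)] at h0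
    exact hlab (by omega)
  · rw [extFn_affSwap he (by simp [cochargeLabeling, hlen]) hz, hval i hi]
end
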